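/- Let (X,d) be a compact metric space and let (X, f_{1,∞}) be a non-autonomous discrete system such that (f_n) converges uniformly to a continuous map f : X → X. If f_{1,∞} is syndetically transitive but not minimal, then f_{1,∞} is syndetically sensitive. -/

import Mathlib

open Set Filter

/-- `nds f i n` is the `n`-step composition `f_i^n = f (i+n-1) ∘ ⋯ ∘ f i`, with `nds f i 0 = id`. -/
def nds {X : Type*} (f : ℕ → X → X) (i : ℕ) : ℕ → X → X
  | 0 => id
  | n + 1 => f (i + n) ∘ nds f i n

section TopDefs

variable {X : Type*} [TopologicalSpace X]

/-- The NDS `f_{1,∞}` is (topologically) transitive. -/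
def NDSTransitive (f : ℕ → X → X) : Prop :=
  ∀ U V : Set X, IsOpen U → U.Nonempty → IsOpen V → V.Nonempty →
    ∃ n : ℕ, 0 < n ∧ (nds f 1 n '' U ∩ V).Nonempty

/-- The NDS `f_{1,∞}` is mixing. -/
def NDSMixing (f : ℕ → X → X) : Prop :=
  ∀ U V : Set X, IsOpen U → U.Nonempty → IsOpen V → V.Nonempty →
    ∃ N : ℕ, ∀ n : ℕ, N ≤ n → (nds f 1 n '' U ∩ V).Nonempty

/-- The NDS `f_{1,∞}` is weakly mixing. -/
def NDSWeaklyMixing (f : ℕ → X → X) : Prop :=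
  ∀ U₁ U₂ V₁ V₂ : Set X, IsOpen U₁ → U₁.Nonempty → IsOpen U₂ → U₂.Nonempty →
    IsOpen V₁ → V₁.Nonempty → IsOpen V₂ → V₂.Nonempty →
    ∃ n : ℕ, 0 < n ∧ (nds f 1 n '' U₁ ∩ V₁).Nonempty ∧ (nds f 1 n '' U₂ ∩ V₂).Nonempty

/-- The NDS `f_{1,∞}` is multi-transitive. -/
def NDSMultiTransitive (f : ℕ → X → X) : Prop :=
  ∀ m : ℕ, 0 < m → ∀ U V : Fin m → Set X,
    (∀ j, IsOpen (U j)) → (∀ j, (U j).Nonempty) →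
    (∀ j, IsOpen (V j)) → (∀ j, (V j).Nonempty) →
    ∃ l : ℕ, 0 < l ∧ ∀ j : Fin m, (nds f 1 (l * (j.1 + 1)) '' U j ∩ V j).Nonempty

/-- The NDS `f_{1,∞}` is totally transitive. -/
def NDSTotallyTransitive (f : ℕ → X → X) : Prop :=
  ∀ k : ℕ, 0 < k → ∀ U V : Set X, IsOpen U → U.Nonempty → IsOpen V → V.Nonempty →
    ∃ n : ℕ, 0 < n ∧ (nds f 1 (n * k) '' U ∩ V).Nonempty

/-- The NDS `f_{1,∞}` is minimal: every orbit is dense. -/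
def NDSMinimal (f : ℕ → X → X) : Prop :=
  ∀ x : X, Dense (Set.range fun n : ℕ => nds f 1 n x)

/-- The NDS `f_{1,∞}` is feeble open. -/
def FeebleOpen (f : ℕ → X → X) : Prop :=
  ∀ i : ℕ, 1 ≤ i → ∀ U : Set X, IsOpen U → U.Nonempty → (interior (f i '' U)).Nonempty

/-- A set of positive integers is syndetic (has bounded gaps). -/
def SyndeticSet (A : Set ℕ) : Prop :=
  ∃ M : ℕ, ∀ i : ℕ, 1 ≤ i → ∃ j ∈ A, i ≤ j ∧ j ≤ i + M

/-- A set of positive integers is thick (contains arbitrarily long runs). -/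
def ThickSet (A : Set ℕ) : Prop :=
  ∀ p : ℕ, ∃ n : ℕ, ∀ j : ℕ, n ≤ j → j ≤ n + p → j ∈ A

/-- The NDS `f_{1,∞}` is syndetically transitive. -/
def NDSSyndeticallyTransitive (f : ℕ → X → X) : Prop :=
  ∀ U V : Set X, IsOpen U → U.Nonempty → IsOpen V → V.Nonempty →
    SyndeticSet {n : ℕ | 0 < n ∧ (nds f 1 n '' U ∩ V).Nonempty}

/-- The NDS `f_{1,∞}` has dense periodic points. -/
def NDSDensePeriodicPoints (f : ℕ → X → X) : Prop :=
  Dense {x : X | ∃ k : ℕ, 0 < k ∧ ∀ n : ℕ, 0 < n → nds f 1 (k * n) x = x}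

/-- The NDS `f_{k,∞}` is strongly transitive. -/
def NDSStronglyTransitiveFrom (f : ℕ → X → X) (k : ℕ) : Prop :=
  ∀ U : Set X, IsOpen U → U.Nonempty →
    ∃ M : ℕ, 0 < M ∧ (⋃ i ∈ Set.Icc 1 M, nds f k i '' U) = Set.univ

/-- An autonomous map is transitive. -/
def MapTransitive {Y : Type*} [TopologicalSpace Y] (g : Y → Y) : Prop :=
  ∀ U V : Set Y, IsOpen U → U.Nonempty → IsOpen V → V.Nonempty →
    ∃ n : ℕ, 0 < n ∧ (g^[n] '' U ∩ V).Nonempty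

/-- An autonomous map is weakly mixing. -/
def MapWeaklyMixing {Y : Type*} [TopologicalSpace Y] (g : Y → Y) : Prop :=
  ∀ U₁ U₂ V₁ V₂ : Set Y, IsOpen U₁ → U₁.Nonempty → IsOpen U₂ → U₂.Nonempty →
    IsOpen V₁ → V₁.Nonempty → IsOpen V₂ → V₂.Nonempty →
    ∃ n : ℕ, 0 < n ∧ (g^[n] '' U₁ ∩ V₁).Nonempty ∧ (g^[n] '' U₂ ∩ V₂).Nonempty

/-- An autonomous map is totally transitive. -/
def MapTotallyTransitive {Y : Type*} [TopologicalSpace Y] (g : Y → Y) : Prop :=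
  ∀ k : ℕ, 0 < k → ∀ U V : Set Y, IsOpen U → U.Nonempty → IsOpen V → V.Nonempty →
    ∃ n : ℕ, 0 < n ∧ (g^[n * k] '' U ∩ V).Nonempty

/-- An autonomous map is syndetically transitive. -/
def MapSyndeticallyTransitive {Y : Type*} [TopologicalSpace Y] (g : Y → Y) : Prop :=
  ∀ U V : Set Y, IsOpen U → U.Nonempty → IsOpen V → V.Nonempty →
    SyndeticSet {n : ℕ | 0 < n ∧ (g^[n] '' U ∩ V).Nonempty}

/-- An autonomous map is minimal. -/
def MapMinimal {Y : Type*} [TopologicalSpace Y] (g : Y → Y) : Prop :=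
  ∀ x : Y, Dense (Set.range fun n : ℕ => g^[n] x)

end TopDefs

section MetricDefs

variable {X : Type*} [MetricSpace X]

/-- The compositions `(f_r^k)` converge collectively to `(f^k)` (w.r.t. the supremum metric). -/
def CollectivelyConverges (f : ℕ → X → X) (g : X → X) : Prop :=
  ∀ ε : ℝ, 0 < ε → ∃ r₀ : ℕ, ∀ r : ℕ, r₀ ≤ r → ∀ k : ℕ, 1 ≤ k → ∀ x : X,
    dist (nds f r k x) (g^[k] x) < ε

/-- `N(U, δ)`: the times at which the NDS is `δ`-sensitive on `U`. -/
def SensSet (f : ℕ → X → X) (U : Set X) (δ : ℝ) : Set ℕ :=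
  {n : ℕ | 0 < n ∧ ∃ x ∈ U, ∃ y ∈ U, δ < dist (nds f 1 n x) (nds f 1 n y)}

/-- The NDS `f_{1,∞}` is multi-sensitive. -/
def NDSMultiSensitive (f : ℕ → X → X) : Prop :=
  ∃ δ : ℝ, 0 < δ ∧ ∀ m : ℕ, 0 < m → ∀ U : Fin m → Set X,
    (∀ i, IsOpen (U i)) → (∀ i, (U i).Nonempty) → (⋂ i, SensSet f (U i) δ).Nonempty

/-- The NDS `f_{1,∞}` is thickly sensitive. -/
def NDSThicklySensitive (f : ℕ → X → X) : Prop :=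
  ∃ δ : ℝ, 0 < δ ∧ ∀ U : Set X, IsOpen U → U.Nonempty → ThickSet (SensSet f U δ)

/-- The NDS `f_{1,∞}` is syndetically sensitive. -/
def NDSSyndeticallySensitive (f : ℕ → X → X) : Prop :=
  ∃ δ : ℝ, 0 < δ ∧ ∀ U : Set X, IsOpen U → U.Nonempty → SyndeticSet (SensSet f U δ)

/-- The NDS `f_{1,∞}` is mildly mixing: its product with every transitive NDS on a compact
metric space is transitive. -/
def NDSMildlyMixing (f : ℕ → X → X) : Prop :=
  ∀ (Y : Type*) [MetricSpace Y] [CompactSpace Y] (g : ℕ → Y → Y),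
    (∀ n : ℕ, 1 ≤ n → Continuous (g n)) → NDSTransitive g →
    NDSTransitive (fun n (p : X × Y) => (f n p.1, g n p.2))

/-- The NDS `f_{1,∞}` is Li–Yorke chaotic. -/
def LiYorkeChaotic (f : ℕ → X → X) : Prop :=
  ∃ S : Set X, ¬S.Countable ∧ ∀ x ∈ S, ∀ y ∈ S, x ≠ y →
    Filter.liminf (fun n : ℕ => dist (nds f 1 n x) (nds f 1 n y)) Filter.atTop = 0 ∧
    0 < Filter.limsup (fun n : ℕ => dist (nds f 1 n x) (nds f 1 n y)) Filter.atTop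

end MetricDefs


/-! Let `x₀` be a point whose orbit stays at distance `ρ` from some `v`, and let `U` be open.
Syndetic transitivity sends `U` into the ball `B(v, ρ/4)` at syndetic times, and also
`η`-close to a point `f_1^{r₀} x₀` of the orbit at syndetic times `n`. Since `f_n → F`
uniformly and `F` is uniformly continuous, the orbits of two `η`-close points stay `ρ/2`-close for
a bounded number of further steps, once the starting time is past `r₀`. So within a bounded
delay after each such `n` there is a time `m` at which one point of `U` is near `v` while another
is `ρ/2`-close to the orbit of `x₀`, hence `ρ/2`-far from `v`: `m` belongs to `N(U, ρ/4)`. -/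

theorem SyndeticSet.of_forall_exists_mem_Icc {A B : Set ℕ} (hA : SyndeticSet A) (r₀ K : ℕ)
    (h : ∀ n ∈ A, r₀ ≤ n → ∃ m ∈ Icc n (n + K), m ∈ B) : SyndeticSet B := by
  obtain ⟨M, hM⟩ := hA
  refine ⟨r₀ + M + K, fun i hi => ?_⟩
  obtain ⟨n, hnA, hin, hni⟩ := hM (i + r₀) (by omega)
  obtain ⟨m, ⟨hnm, hmn⟩, hmB⟩ := h n hnA (by omega)
  exact ⟨m, hmB, by omega, by omega⟩

section

variable {X : Type*}

theorem nds_add (f : ℕ → X → X) (i m k : ℕ) :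
    nds f i (m + k) = nds f (i + m) k ∘ nds f i m := by
  induction k with
  | zero => rfl
  | succ k ih => rw [← Nat.add_assoc, nds, ih, nds, Nat.add_assoc]; rfl

variable [PseudoMetricSpace X] {f : ℕ → X → X} {F : X → X}

theorem exists_orbit_avoiding_ball_of_not_minimal (h : ¬NDSMinimal f) :
    ∃ x₀ v : X, ∃ ρ > 0, ∀ n, ρ ≤ dist (nds f 1 n x₀) v := by
  simp only [NDSMinimal, Dense, Metric.mem_closure_iff, not_forall] at h
  push Not at h
  obtain ⟨x₀, v, ρ, hρ, hfar⟩ := h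
  exact ⟨x₀, v, ρ, hρ, fun n => dist_comm v _ ▸ hfar _ ⟨n, rfl⟩⟩

theorem tendstoUniformly_nds (hunif : TendstoUniformly f F atTop) (hF : UniformContinuous F)
    (j : ℕ) : TendstoUniformly (fun r => nds f r j) F^[j] atTop := by
  induction j with
  | zero => exact fun u hu => .of_forall fun _ _ => refl_mem_uniformity hu
  | succ j ih =>
    have hFcomp := Metric.tendstoUniformly_iff.1 (hF.comp_tendstoUniformly ih)
    have hshift := Metric.tendstoUniformly_iff.1 hunif
    rw [Metric.tendstoUniformly_iff]
    intro ε hε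
    filter_upwards [hFcomp _ (half_pos hε),
      tendsto_add_atTop_nat j |>.eventually (hshift _ (half_pos hε))] with r h1 h2 x
    rw [Function.iterate_succ_apply']
    calc dist (F (F^[j] x)) (f (r + j) (nds f r j x))
        ≤ dist (F (F^[j] x)) (F (nds f r j x)) + dist (F (nds f r j x)) (f (r + j) (nds f r j x)) :=
          dist_triangle _ _ _
      _ < ε / 2 + ε / 2 := add_lt_add (h1 x) (h2 _)
      _ = ε := add_halves ε

theorem exists_pos_forall_le_dist_iterate_lt (hF : UniformContinuous F) (M : ℕ) {ε : ℝ}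
    (hε : 0 < ε) : ∃ η > 0, ∀ j ≤ M, ∀ a b, dist a b < η → dist (F^[j] a) (F^[j] b) < ε := by
  have : ∀ᶠ p in uniformity X, ∀ j ∈ Iic M, dist (F^[j] p.1) (F^[j] p.2) < ε :=
    (finite_Iic M).eventually_all.2 fun j _ => UniformContinuous.iterate F j hF (Metric.dist_mem_uniformity hε)
  obtain ⟨η, hη, hsub⟩ := Metric.mem_uniformity_dist.1 this
  exact ⟨η, hη, fun j hj a b hab => hsub hab j hj⟩

theorem exists_pos_forall_le_dist_nds_lt (hunif : TendstoUniformly f F atTop)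
    (hF : UniformContinuous F) (M : ℕ) {ε : ℝ} (hε : 0 < ε) :
    ∃ η > 0, ∃ r₀, ∀ r ≥ r₀, ∀ r' ≥ r₀, ∀ a b, dist a b < η →
      ∀ j ≤ M, dist (nds f r j a) (nds f r' j b) < ε := by
  have hε3 : 0 < ε / 3 := by positivity
  obtain ⟨η, hη, hFj⟩ := exists_pos_forall_le_dist_iterate_lt hF M hε3
  have hclose : ∀ᶠ r in atTop, ∀ j ∈ Iic M, ∀ x, dist (F^[j] x) (nds f r j x) < ε / 3 :=
    (finite_Iic M).eventually_all.2 fun j _ =>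
      Metric.tendstoUniformly_iff.1 (tendstoUniformly_nds hunif hF j) _ hε3
  obtain ⟨r₀, hr₀⟩ := eventually_atTop.1 hclose
  refine ⟨η, hη, r₀, fun r hr r' hr' a b hab j hj => ?_⟩
  calc dist (nds f r j a) (nds f r' j b)
      ≤ dist (nds f r j a) (F^[j] a) + dist (F^[j] a) (F^[j] b) + dist (F^[j] b) (nds f r' j b) :=
        dist_triangle4 _ _ _ _
    _ < ε / 3 + ε / 3 + ε / 3 := by
        gcongr
        · exact dist_comm (F^[j] a) _ ▸ hr₀ r hr j hj a
        · exact hFj j hj a b hab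
        · exact hr₀ r' hr' j hj b
    _ = ε := by ring

end

theorem syndeticallyTransitive_notMinimal_implies_syndeticallySensitive_general {X : Type*}
    [MetricSpace X] [CompactSpace X]
    (f : ℕ → X → X) (F : X → X)
    (hF : Continuous F)
    (hunif : TendstoUniformly (fun n x => f n x) F Filter.atTop)
    (hsynd : NDSSyndeticallyTransitive f) (hnotmin : ¬NDSMinimal f) :
    NDSSyndeticallySensitive f := by
  obtain ⟨x₀, v, ρ, hρ, hfar⟩ := exists_orbit_avoiding_ball_of_not_minimal hnotmin
  refine ⟨ρ / 4, by positivity, fun U hU hUne => ?_⟩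
  obtain ⟨M, hnear_v⟩ := hsynd U (Metric.ball v (ρ / 4)) hU hUne Metric.isOpen_ball
    ⟨v, Metric.mem_ball_self (by positivity)⟩
  obtain ⟨η, hη, r₀, hshadow⟩ := exists_pos_forall_le_dist_nds_lt hunif
    (CompactSpace.uniformContinuous_of_continuous hF) M (half_pos hρ)
  refine (hsynd U (Metric.ball (nds f 1 r₀ x₀) η) hU hUne Metric.isOpen_ball
    ⟨_, Metric.mem_ball_self hη⟩).of_forall_exists_mem_Icc r₀ M ?_
  rintro n ⟨hn0, _, ⟨y, hyU, rfl⟩, hy⟩ hn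
  obtain ⟨m, ⟨hm0, _, ⟨z, hzU, rfl⟩, hz⟩, hnm, hmn⟩ := hnear_v n hn0
  refine ⟨m, ⟨hnm, hmn⟩, hm0, y, hyU, z, hzU, ?_⟩
  obtain ⟨j, rfl⟩ := Nat.exists_eq_add_of_le hnm
  have hyx : dist (nds f 1 (n + j) y) (nds f 1 (r₀ + j) x₀) < ρ / 2 := by
    simp only [nds_add, Function.comp_apply]
    exact hshadow _ (by omega) _ (by omega) _ _ hy j (by omega)
  linarith [hfar (r₀ + j), Metric.mem_ball.1 hz, dist_comm (nds f 1 (n + j) y) (nds f 1 (r₀ + j) x₀),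
    dist_triangle (nds f 1 (r₀ + j) x₀) (nds f 1 (n + j) y) v,
    dist_triangle (nds f 1 (n + j) y) (nds f 1 (n + j) z) v]

theorem syndeticallyTransitive_notMinimal_implies_syndeticallySensitive {X : Type*}
    [MetricSpace X] [CompactSpace X]
    (f : ℕ → X → X) (F : X → X)
    (hcont : ∀ n : ℕ, 1 ≤ n → Continuous (f n))
    (hF : Continuous F)
    (hunif : TendstoUniformly (fun n x => f n x) F Filter.atTop)
    (hsynd : NDSSyndeticallyTransitive f) (hnotmin : ¬NDSMinimal f) :
    NDSSyndeticallySensitive f :=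
  syndeticallyTransitive_notMinimal_implies_syndeticallySensitive_general f F hF hunif hsynd hnotmin
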